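/- For any context-free grammar G and any stack congruence ≡ on the canonical LR(0) shift-reduce recognizer R(G) of G, L(G) ⊆ L(F_≡(G)), where F_≡(G) is the flattening of the unfolded recognizer R(G)_≡. -/

import Mathlib

/-!
Infrastructure for finite-state approximation of context-free grammars
(Pereira & Wright). We use Mathlib's `ContextFreeGrammar`.

A dotted rule `A → α · β` is represented as `(some A, α, β)`;
the auxiliary dotted rules `S' → · S` and `S' → S ·` are represented with
first component `none`.  States of the LR(0) characteristic machine `M(G)`
are sets of dotted rules (the determinization by the subset construction);
the transition function `next` is total, with the empty set `∅` playing the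
role of "undefined", so genuine transitions are those with nonempty target.
-/

namespace LRApprox

universe uN uT

variable {T : Type uT}

/-- Context-free grammar with nonterminals in an arbitrary universe, as in the Mathlib
version this file was written against (current Mathlib restricts nonterminals to `Type`). -/
structure ContextFreeGrammar.{uN', uT'} (T : Type uT') where
  /-- Type of nonterminals. -/
  NT : Type uN'
  /-- Initial nonterminal. -/
  initial : NT
  /-- Rewrite rules. -/
  rules : Finset (ContextFreeRule T NT)

/-- One step of a context-free transformation by a rule of `g`. -/
def ContextFreeGrammar.Produces (g : ContextFreeGrammar.{uN} T) (u v : List (Symbol T g.NT)) :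
    Prop :=
  ∃ r ∈ g.rules, r.Rewrites u v

/-- Some number of rewriting steps. -/
abbrev ContextFreeGrammar.Derives (g : ContextFreeGrammar.{uN} T) :
    List (Symbol T g.NT) → List (Symbol T g.NT) → Prop :=
  Relation.ReflTransGen g.Produces

/-- `g` derives `s` from its initial nonterminal. -/
def ContextFreeGrammar.Generates (g : ContextFreeGrammar.{uN} T) (s : List (Symbol T g.NT)) :
    Prop :=
  g.Derives [Symbol.nonterminal g.initial] s

/-- The language generated by `g`. -/
def ContextFreeGrammar.language (g : ContextFreeGrammar.{uN} T) : Language T :=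
  { w : List T | g.Generates (w.map Symbol.terminal) }

/-- A dotted rule `A → α · β`; `none` as first component stands for the
auxiliary start symbol `S'`. -/
abbrev DottedRule (g : ContextFreeGrammar.{uN} T) : Type _ :=
  Option g.NT × List (Symbol T g.NT) × List (Symbol T g.NT)

/-- A state of the characteristic machine `M(G)`: a set of dotted rules. -/
abbrev LRState (g : ContextFreeGrammar.{uN} T) : Type _ := Set (DottedRule g)

/-- Closure of a set of dotted rules: whenever `A → α · B β` is present and
`B → γ` is a rule, add `B → · γ`. -/
inductive Closure (g : ContextFreeGrammar.{uN} T) (R : Set (DottedRule g)) :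
    DottedRule g → Prop
  | base {d : DottedRule g} : d ∈ R → Closure g R d
  | step {A : Option g.NT} {α β : List (Symbol T g.NT)} {B : g.NT}
      (r : ContextFreeRule T g.NT) :
      Closure g R (A, α, Symbol.nonterminal B :: β) →
      r ∈ g.rules → r.input = B → Closure g R (some B, [], r.output)

/-- The transition function `δ` of `M(G)`: shift the dot over `X` and take the
closure.  The empty set plays the role of "undefined". -/
def next (g : ContextFreeGrammar.{uN} T) (s : LRState g) (X : Symbol T g.NT) : LRState g :=
  {d | Closure g {d' | ∃ A α β, (A, α, X :: β) ∈ s ∧ d' = (A, α ++ [X], β)} d}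

/-- The start state `s₀` of `M(G)`: the closure of `{S' → · S}`. -/
def start (g : ContextFreeGrammar.{uN} T) : LRState g :=
  {d | Closure g {(none, [], [Symbol.nonterminal g.initial])} d}

/-- The dotted rule `S' → S ·`. -/
def finalDR (g : ContextFreeGrammar.{uN} T) : DottedRule g :=
  (none, [Symbol.nonterminal g.initial], [])

/-- A state is final iff it contains `S' → S ·`. -/
def IsFinal (g : ContextFreeGrammar.{uN} T) (s : LRState g) : Prop := finalDR g ∈ s

/-- Iterated transition function, extended to strings of symbols. -/
def nextStar (g : ContextFreeGrammar.{uN} T) (s : LRState g)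
    (α : List (Symbol T g.NT)) : LRState g :=
  α.foldl (next g) s

/-- A stack of the shift-reduce recognizer: a sequence of (state, symbol) pairs. -/
abbrev Stack (g : ContextFreeGrammar.{uN} T) : Type _ :=
  List (LRState g × Symbol T g.NT)

/-- `Stacks g s σ` iff `σ = ⟨q₀,X₀⟩…⟨q_k,X_k⟩` with `q₀ = s₀`,
`q_i = δ(q_{i-1},X_{i-1})` and `s = δ(q_k,X_k)`; in addition `Stacks s₀`
contains the empty sequence. -/
inductive Stacks (g : ContextFreeGrammar.{uN} T) : LRState g → Stack g → Prop
  | nil : Stacks g (start g) []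
  | snoc {q : LRState g} {σ : Stack g} {X : Symbol T g.NT} :
      Stacks g q σ → next g q X ≠ ∅ → Stacks g (next g q X) (σ ++ [(q, X)])

/-- A configuration `⟨s, σ, w⟩` of the shift-reduce recognizer `R(G)`. -/
structure Cfg (g : ContextFreeGrammar.{uN} T) where
  state : LRState g
  stack : Stack g
  input : List T

/-- A shift move of `R(G)`. -/
inductive ShiftStep (g : ContextFreeGrammar.{uN} T) : Cfg g → Cfg g → Prop
  | shift {s : LRState g} {σ : Stack g} {x : T} {w : List T} :
      next g s (Symbol.terminal x) ≠ ∅ →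
      ShiftStep g ⟨s, σ, x :: w⟩
        ⟨next g s (Symbol.terminal x), σ ++ [(s, Symbol.terminal x)], w⟩

/-- A reduce move of `R(G)`. -/
inductive ReduceStep (g : ContextFreeGrammar.{uN} T) : Cfg g → Cfg g → Prop
  | empty {s : LRState g} {σ : Stack g} {w : List T} {A : g.NT} :
      (some A, ([] : List (Symbol T g.NT)), ([] : List (Symbol T g.NT))) ∈ s →
      next g s (Symbol.nonterminal A) ≠ ∅ →
      ReduceStep g ⟨s, σ, w⟩
        ⟨next g s (Symbol.nonterminal A), σ ++ [(s, Symbol.nonterminal A)], w⟩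
  | pop {s : LRState g} {σ τ : Stack g} {w : List T} {A : g.NT}
      {s₁ : LRState g} {X₁ : Symbol T g.NT} :
      (some A, ((s₁, X₁) :: τ).map Prod.snd, ([] : List (Symbol T g.NT))) ∈ s →
      next g s₁ (Symbol.nonterminal A) ≠ ∅ →
      ReduceStep g ⟨s, σ ++ (s₁, X₁) :: τ, w⟩
        ⟨next g s₁ (Symbol.nonterminal A), σ ++ [(s₁, Symbol.nonterminal A)], w⟩

/-- A move of the shift-reduce recognizer `R(G)`. -/
def Step (g : ContextFreeGrammar.{uN} T) (c c' : Cfg g) : Prop :=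
  ShiftStep g c c' ∨ ReduceStep g c c'

/-- `R(G)` accepts `w`: some sequence of moves leads from the initial
configuration `⟨s₀, ε, w⟩` to a final configuration `⟨s, ⟨s₀,S⟩, ε⟩`, `s ∈ F`. -/
def RAccepts (g : ContextFreeGrammar.{uN} T) (w : List T) : Prop :=
  ∃ s : LRState g, IsFinal g s ∧
    Relation.ReflTransGen (Step g) ⟨start g, [], w⟩
      ⟨s, [(start g, Symbol.nonterminal g.initial)], []⟩

/-- A stack congruence on `R(G)`: a family of equivalence relations on
`Stacks(s)`, compatible with pushing. -/
def IsStackCongruence (g : ContextFreeGrammar.{uN} T)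
    (E : LRState g → Stack g → Stack g → Prop) : Prop :=
  (∀ s σ σ', E s σ σ' → Stacks g s σ ∧ Stacks g s σ') ∧
  (∀ s σ, Stacks g s σ → E s σ σ) ∧
  (∀ s σ σ', E s σ σ' → E s σ' σ) ∧
  (∀ s σ₁ σ₂ σ₃, E s σ₁ σ₂ → E s σ₂ σ₃ → E s σ₁ σ₃) ∧
  (∀ s X σ σ', next g s X ≠ ∅ → E s σ σ' →
    E (next g s X) (σ ++ [(s, X)]) (σ' ++ [(s, X)]))

/-- A state of the unfolded recognizer `R_≡`: a state of `M(G)` together with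
an equivalence class of stacks (represented as a set of stacks). -/
abbrev UState (g : ContextFreeGrammar.{uN} T) : Type _ := LRState g × Set (Stack g)

/-- Transition function `δ_≡` of the unfolded recognizer:
`δ_≡(⟨s,[σ]⟩, X) = ⟨δ(s,X), [σ⟨s,X⟩]⟩`. -/
def uNext (g : ContextFreeGrammar.{uN} T) (E : LRState g → Stack g → Stack g → Prop)
    (p : UState g) (X : Symbol T g.NT) : UState g :=
  (next g p.1 X,
   {τ | Stacks g (next g p.1 X) τ ∧ ∃ σ ∈ p.2, E (next g p.1 X) τ (σ ++ [(p.1, X)])})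

/-- Start state `⟨s₀, [ε]⟩` of the unfolded recognizer. -/
def uStart (g : ContextFreeGrammar.{uN} T)
    (E : LRState g → Stack g → Stack g → Prop) : UState g :=
  (start g, {τ | Stacks g (start g) τ ∧ E (start g) τ []})

/-- Genuine states of the unfolded recognizer: pairs `⟨s, [σ]_s⟩` with
`σ ∈ Stacks(s)`. -/
def IsUState (g : ContextFreeGrammar.{uN} T)
    (E : LRState g → Stack g → Stack g → Prop) (p : UState g) : Prop :=
  ∃ σ, Stacks g p.1 σ ∧ p.2 = {τ | Stacks g p.1 τ ∧ E p.1 τ σ}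

/-- Iterated `δ_≡`, extended to strings of symbols. -/
def uNextStar (g : ContextFreeGrammar.{uN} T)
    (E : LRState g → Stack g → Stack g → Prop)
    (p : UState g) (α : List (Symbol T g.NT)) : UState g :=
  α.foldl (uNext g E) p

/-- A configuration of the unfolded recognizer `R_≡`. -/
structure UCfg (g : ContextFreeGrammar.{uN} T) where
  state : UState g
  stack : List (UState g × Symbol T g.NT)
  input : List T

/-- A shift move of the unfolded recognizer. -/
inductive UShiftStep (g : ContextFreeGrammar.{uN} T)
    (E : LRState g → Stack g → Stack g → Prop) : UCfg g → UCfg g → Prop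
  | shift {p : UState g} {σ : List (UState g × Symbol T g.NT)} {x : T} {w : List T} :
      next g p.1 (Symbol.terminal x) ≠ ∅ →
      UShiftStep g E ⟨p, σ, x :: w⟩
        ⟨uNext g E p (Symbol.terminal x), σ ++ [(p, Symbol.terminal x)], w⟩

/-- A reduce move of the unfolded recognizer. -/
inductive UReduceStep (g : ContextFreeGrammar.{uN} T)
    (E : LRState g → Stack g → Stack g → Prop) : UCfg g → UCfg g → Prop
  | empty {p : UState g} {σ : List (UState g × Symbol T g.NT)} {w : List T} {A : g.NT} :
      (some A, ([] : List (Symbol T g.NT)), ([] : List (Symbol T g.NT))) ∈ p.1 →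
      next g p.1 (Symbol.nonterminal A) ≠ ∅ →
      UReduceStep g E ⟨p, σ, w⟩
        ⟨uNext g E p (Symbol.nonterminal A), σ ++ [(p, Symbol.nonterminal A)], w⟩
  | pop {p : UState g} {σ τ : List (UState g × Symbol T g.NT)} {w : List T} {A : g.NT}
      {p₁ : UState g} {X₁ : Symbol T g.NT} :
      (some A, ((p₁, X₁) :: τ).map Prod.snd, ([] : List (Symbol T g.NT))) ∈ p.1 →
      next g p₁.1 (Symbol.nonterminal A) ≠ ∅ →
      UReduceStep g E ⟨p, σ ++ (p₁, X₁) :: τ, w⟩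
        ⟨uNext g E p₁ (Symbol.nonterminal A), σ ++ [(p₁, Symbol.nonterminal A)], w⟩

/-- A move of the unfolded recognizer `R_≡`. -/
def UStep (g : ContextFreeGrammar.{uN} T)
    (E : LRState g → Stack g → Stack g → Prop) (c c' : UCfg g) : Prop :=
  UShiftStep g E c c' ∨ UReduceStep g E c c'

/-- The unfolded recognizer `R_≡` accepts `w`. -/
def UAccepts (g : ContextFreeGrammar.{uN} T)
    (E : LRState g → Stack g → Stack g → Prop) (w : List T) : Prop :=
  ∃ p : UState g, IsFinal g p.1 ∧
    Relation.ReflTransGen (UStep g E) ⟨uStart g E, [], w⟩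
      ⟨p, [(uStart g E, Symbol.nonterminal g.initial)], []⟩

/-- `Pop(p)`: the unfolded states reachable from `p` by a reduction. -/
def PopSet (g : ContextFreeGrammar.{uN} T)
    (E : LRState g → Stack g → Stack g → Prop) (p : UState g) : Set (UState g) :=
  {p' | ∃ (A : g.NT) (α : List (Symbol T g.NT)) (p'' : UState g),
    IsUState g E p'' ∧
    (some A, α, ([] : List (Symbol T g.NT))) ∈ p.1 ∧
    (some A, ([] : List (Symbol T g.NT)), α) ∈ p''.1 ∧
    uNextStar g E p'' α = p ∧
    next g p''.1 (Symbol.nonterminal A) ≠ ∅ ∧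
    uNext g E p'' (Symbol.nonterminal A) = p'}

/-- Paths in the flattening `F_≡` of the unfolded recognizer: terminal
transitions follow `δ_≡` and reductions become ε-transitions. -/
inductive FPath (g : ContextFreeGrammar.{uN} T)
    (E : LRState g → Stack g → Stack g → Prop) : UState g → List T → UState g → Prop
  | refl (p : UState g) : FPath g E p [] p
  | shift {p : UState g} {x : T} {w : List T} {q : UState g} :
      next g p.1 (Symbol.terminal x) ≠ ∅ →
      FPath g E (uNext g E p (Symbol.terminal x)) w q → FPath g E p (x :: w) q
  | eps {p p' : UState g} {w : List T} {q : UState g} :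
      p' ∈ PopSet g E p → FPath g E p' w q → FPath g E p w q

/-- The flattening `F_≡` accepts `w`. -/
def FAccepts (g : ContextFreeGrammar.{uN} T)
    (E : LRState g → Stack g → Stack g → Prop) (w : List T) : Prop :=
  ∃ q : UState g, IsFinal g q.1 ∧ FPath g E (uStart g E) w q

/-- A stack `⟨s₁,X₁⟩…⟨s_k,X_k⟩` is a loop if `δ(s_k,X_k) = s₁`. -/
def IsLoop (g : ContextFreeGrammar.{uN} T) (τ : Stack g) : Prop :=
  ∃ p q : LRState g × Symbol T g.NT,
    τ.head? = some p ∧ τ.getLast? = some q ∧ next g q.1 q.2 = p.1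

/-- A loop is minimal if no proper prefix of it is a loop. -/
def IsMinimalLoop (g : ContextFreeGrammar.{uN} T) (τ : Stack g) : Prop :=
  IsLoop g τ ∧ ∀ τ' : Stack g, τ' <+: τ → τ' ≠ τ → ¬ IsLoop g τ'

/-- A stack is collapsible if it contains a loop as a contiguous segment. -/
def Collapsible (g : ContextFreeGrammar.{uN} T) (σ : Stack g) : Prop :=
  ∃ ρ τ υ : Stack g, σ = ρ ++ τ ++ υ ∧ IsLoop g τ

/-- `σ` immediately collapses to `σ'`: remove the earliest minimal loop. -/
def ImmediatelyCollapses (g : ContextFreeGrammar.{uN} T) (σ σ' : Stack g) : Prop :=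
  ∃ ρ τ υ : Stack g, σ = ρ ++ τ ++ υ ∧ σ' = ρ ++ υ ∧ IsMinimalLoop g τ ∧
    ¬ ∃ ρ' τ' υ' : Stack g, σ = ρ' ++ τ' ++ υ' ∧ ρ' <+: ρ ∧ ρ' ≠ ρ ∧ IsLoop g τ'

/-- `σ` collapses to `σ'` by finitely many immediate collapses. -/
def Collapses (g : ContextFreeGrammar.{uN} T) : Stack g → Stack g → Prop :=
  Relation.ReflTransGen (ImmediatelyCollapses g)

/-- Two stacks are collapsing-equivalent if they collapse to the same
uncollapsible stack. -/
def CollEquiv (g : ContextFreeGrammar.{uN} T) (σ σ' : Stack g) : Prop :=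
  ∃ τ : Stack g, ¬ Collapsible g τ ∧ Collapses g σ τ ∧ Collapses g σ' τ

/-- The collapsing congruence: the restriction of collapsing equivalence to
the sets `Stacks(s)`. -/
def CollCong (g : ContextFreeGrammar.{uN} T) (s : LRState g) (σ σ' : Stack g) : Prop :=
  Stacks g s σ ∧ Stacks g s σ' ∧ CollEquiv g σ σ'

/-- A CFG is left-linear if every rule has the form `A → Bβ` or `A → β`
with `β` a string of terminals. -/
def LeftLinear (g : ContextFreeGrammar.{uN} T) : Prop :=
  ∀ r ∈ g.rules, (∃ β : List T, r.output = β.map Symbol.terminal) ∨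
    (∃ (B : g.NT) (β : List T), r.output = Symbol.nonterminal B :: β.map Symbol.terminal)

/-- A CFG is right-linear if every rule has the form `A → βB` or `A → β`
with `β` a string of terminals. -/
def RightLinear (g : ContextFreeGrammar.{uN} T) : Prop :=
  ∀ r ∈ g.rules, (∃ β : List T, r.output = β.map Symbol.terminal) ∨
    (∃ (B : g.NT) (β : List T), r.output = β.map Symbol.terminal ++ [Symbol.nonterminal B])

/-- Reachable (genuine) states of `M(G)`. -/
def ReachableState (g : ContextFreeGrammar.{uN} T) (s : LRState g) : Prop :=
  s ≠ ∅ ∧ ∃ α : List (Symbol T g.NT), nextStar g (start g) α = s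

end LRApprox

open LRApprox

/-!
A derivation of `w` is read as a parse forest, which is then walked left to right through `δ_≡`:
a terminal is a shift, and a subtree for a rule `B → γ` entered at the unfolded state `p` ends at
`δ_≡(p, γ)`, whose completed item `B → γ·` pops, with witness `p`, to `δ_≡(p, B)`, exactly where
the walk continues. The congruence is what keeps every visited pair a genuine state `⟨s, [σ]_s⟩`,
as `Pop` requires of its witness.
-/

namespace LRApprox

variable {T : Type*} {g : ContextFreeGrammar T}

inductive Parses (g : ContextFreeGrammar T) : List (Symbol T g.NT) → List T → Prop
  | nil : Parses g [] []
  | terminal {γ : List (Symbol T g.NT)} {w : List T} (x : T) :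
      Parses g γ w → Parses g (.terminal x :: γ) (x :: w)
  | nonterminal {γ : List (Symbol T g.NT)} {u v : List T} {r : ContextFreeRule T g.NT} :
      r ∈ g.rules → Parses g r.output u → Parses g γ v →
      Parses g (.nonterminal r.input :: γ) (u ++ v)

namespace Parses

theorem append {α β : List (Symbol T g.NT)} {u v : List T}
    (hα : Parses g α u) (hβ : Parses g β v) : Parses g (α ++ β) (u ++ v) := by
  induction hα with
  | nil => exact hβ
  | terminal x _ ih => exact .terminal x ih
  | nonterminal hr hout _ _ ih =>
    simpa only [List.cons_append, List.append_assoc] using nonterminal hr hout ih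

theorem exists_append_of_append {α β : List (Symbol T g.NT)} {w : List T}
    (h : Parses g (α ++ β) w) : ∃ u v, w = u ++ v ∧ Parses g α u ∧ Parses g β v := by
  induction α generalizing w with
  | nil => exact ⟨[], w, rfl, nil, h⟩
  | cons a α ih =>
    cases h with
    | terminal x h =>
      obtain ⟨u, v, rfl, hu, hv⟩ := ih h
      exact ⟨x :: u, v, rfl, terminal x hu, hv⟩
    | nonterminal hr hout h =>
      obtain ⟨u, v, rfl, hu, hv⟩ := ih h
      exact ⟨_ ++ u, v, (List.append_assoc ..).symm, nonterminal hr hout hu, hv⟩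

theorem map_terminal (w : List T) : Parses g (w.map Symbol.terminal) w := by
  induction w with
  | nil => exact nil
  | cons x w ih => exact terminal x ih

theorem of_produces {u v : List (Symbol T g.NT)} {w : List T} (huv : g.Produces u v)
    (h : Parses g v w) : Parses g u w := by
  obtain ⟨r, hr, hrw⟩ := huv
  obtain ⟨p, q, rfl, rfl⟩ := hrw.exists_parts
  obtain ⟨wpr, wq, rfl, hpr, hq⟩ := h.exists_append_of_append
  obtain ⟨wp, wr, rfl, hp, hr'⟩ := hpr.exists_append_of_append
  simpa only [List.append_assoc, List.singleton_append] using hp.append (nonterminal hr hr' hq)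

theorem of_derives {u : List (Symbol T g.NT)} {w : List T}
    (h : g.Derives u (w.map Symbol.terminal)) : Parses g u w := by
  induction h using Relation.ReflTransGen.head_induction_on with
  | refl => exact map_terminal w
  | head huv _ ih => exact of_produces huv ih

end Parses

def IsPredictionClosed (g : ContextFreeGrammar T) (s : LRState g) : Prop := ∀ d, Closure g s d → d ∈ s

theorem isPredictionClosed_closure (R : Set (DottedRule g)) :
    IsPredictionClosed g {d | Closure g R d} := by
  intro d hd
  induction hd with
  | base hd => exact hd
  | step r _ hr hin ih => exact Closure.step r ih hr hin

theorem mem_next_of_mem {s : LRState g} {X : Symbol T g.NT} {A : Option g.NT}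
    {α β : List (Symbol T g.NT)} (h : (A, α, X :: β) ∈ s) : (A, α ++ [X], β) ∈ next g s X :=
  Closure.base ⟨A, α, β, h, rfl⟩

theorem next_ne_empty_of_mem {s : LRState g} {X : Symbol T g.NT} {A : Option g.NT}
    {α β : List (Symbol T g.NT)} (h : (A, α, X :: β) ∈ s) : next g s X ≠ ∅ :=
  Set.nonempty_iff_ne_empty.mp ⟨_, mem_next_of_mem h⟩

theorem mem_nextStar_of_mem {s : LRState g} {A : Option g.NT} {α δ β : List (Symbol T g.NT)}
    (h : (A, α, δ ++ β) ∈ s) : (A, α ++ δ, β) ∈ nextStar g s δ := by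
  induction δ generalizing s α with
  | nil => simpa [nextStar] using h
  | cons X δ ih =>
    have h' := ih (mem_next_of_mem h)
    rwa [List.append_assoc, List.singleton_append] at h'

section Unfolded

variable {E : LRState g → Stack g → Stack g → Prop}

theorem uNextStar_fst (p : UState g) (δ : List (Symbol T g.NT)) :
    (uNextStar g E p δ).1 = nextStar g p.1 δ := by
  induction δ generalizing p with
  | nil => rfl
  | cons X δ ih => exact ih _

theorem isUState_uStart : IsUState g E (uStart g E) :=
  ⟨[], .nil, rfl⟩

theorem IsUState.uNext (hE : IsStackCongruence g E) {p : UState g} {X : Symbol T g.NT}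
    (hp : IsUState g E p) (hne : next g p.1 X ≠ ∅) : IsUState g E (uNext g E p X) := by
  obtain ⟨σ, hσ, hclass⟩ := hp
  obtain ⟨-, hrefl, -, htrans, hpush⟩ := hE
  refine ⟨σ ++ [(p.1, X)], .snoc hσ hne, ?_⟩
  ext τ
  constructor
  · rintro ⟨hτ, σ', hσ', hτσ'⟩
    rw [hclass] at hσ'
    exact ⟨hτ, htrans _ _ _ _ hτσ' (hpush _ X _ _ hne hσ'.2)⟩
  · rintro ⟨hτ, hτσ⟩
    exact ⟨hτ, σ, hclass ▸ ⟨hσ, hrefl _ _ hσ⟩, hτσ⟩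

theorem uNext_mem_popSet {p : UState g} {A : g.NT} {α : List (Symbol T g.NT)}
    (hp : IsUState g E p) (hA : (some A, [], α) ∈ p.1)
    (hne : next g p.1 (.nonterminal A) ≠ ∅) :
    uNext g E p (.nonterminal A) ∈ PopSet g E (uNextStar g E p α) := by
  have hreduce : (some A, α, []) ∈ (uNextStar g E p α).1 := by
    rw [uNextStar_fst]
    simpa using mem_nextStar_of_mem (α := []) (β := []) (by simpa using hA)
  exact ⟨A, α, p, hp, hreduce, hA, rfl, hne, rfl⟩

theorem FPath.append {p q t : UState g} {u v : List T}
    (h₁ : FPath g E p u q) (h₂ : FPath g E q v t) : FPath g E p (u ++ v) t := by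
  induction h₁ with
  | refl _ => exact h₂
  | shift hne _ ih => exact .shift hne (ih h₂)
  | eps hpop _ ih => exact .eps hpop (ih h₂)

theorem fPath_uNextStar_of_parses (hE : IsStackCongruence g E) {δ : List (Symbol T g.NT)}
    {w : List T} (h : Parses g δ w) {p : UState g} {A : Option g.NT}
    {α : List (Symbol T g.NT)} (hp : IsUState g E p) (hpc : IsPredictionClosed g p.1)
    (hmem : (A, α, δ) ∈ p.1) : FPath g E p w (uNextStar g E p δ) := by
  induction h generalizing p A α with
  | nil => exact .refl p
  | terminal x _ ih =>
    have hne := next_ne_empty_of_mem hmem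
    exact .shift hne (ih (hp.uNext hE hne) (isPredictionClosed_closure _) (mem_next_of_mem hmem))
  | @nonterminal γ u v r hr _ _ ih_out ih =>
    have hne := next_ne_empty_of_mem hmem
    have hpredict : (some r.input, [], r.output) ∈ p.1 := hpc _ (.step r (.base hmem) hr rfl)
    exact (ih_out hp hpc hpredict).append <| .eps (uNext_mem_popSet hp hpredict hne) <|
      ih (hp.uNext hE hne) (isPredictionClosed_closure _) (mem_next_of_mem hmem)

end Unfolded

end LRApprox

/-- For any CFG `G` and any stack congruence `≡` on the
canonical LR(0) shift-reduce recognizer `R(G)`, `L(G) ⊆ L(F_≡(G))`, where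
`F_≡(G)` is the flattening of the unfolded recognizer `R(G)_≡`. -/
theorem flattening_is_sound {T : Type*} (g : LRApprox.ContextFreeGrammar T)
    (E : LRState g → Stack g → Stack g → Prop)
    (hE : IsStackCongruence g E) :
    ∀ w ∈ g.language, FAccepts g E w := by
  intro w hw
  have hstart : (none, [], [.nonterminal g.initial]) ∈ (uStart g E).1 := Closure.base rfl
  have hfinal : IsFinal g (uNextStar g E (uStart g E) [.nonterminal g.initial]).1 := by
    rw [IsFinal, finalDR, uNextStar_fst]
    simpa using mem_nextStar_of_mem (α := []) (β := []) (by simpa using hstart)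
  exact ⟨_, hfinal, fPath_uNextStar_of_parses hE (Parses.of_derives hw) isUState_uStart
    (isPredictionClosed_closure _) hstart⟩
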